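/- Let d be a positive natural number, σ > 0, and let μ be a probability measure on ℝ^d. Let φ_σ(y) = (2πσ²)^{−d/2} · exp(−‖y‖²/(2σ²)) and define p : ℝ^d → ℝ by p(x) = ∫ φ_σ(x − x₀) dμ(x₀). Then for every x ∈ ℝ^d, the score of the smoothed distribution satisfies ∇ log p(x) = (1/p(x)) · ∫ φ_σ(x − x₀) · (x₀ − x)/σ² dμ(x₀). -/

import Mathlib

open MeasureTheory
open scoped Real

private lemma aux_mul_exp_le (σ : ℝ) (hσ : 0 < σ) (t : ℝ) (ht : 0 ≤ t) :
    t * Real.exp (-t ^ 2 / (2 * σ ^ 2)) ≤ 2 * σ := by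
  rcases le_or_gt t (2 * σ) with h | h
  · calc t * Real.exp (-t ^ 2 / (2 * σ ^ 2)) ≤ t * 1 := by
          apply mul_le_mul_of_nonneg_left _ ht
          rw [Real.exp_le_one_iff]
          apply div_nonpos_of_nonpos_of_nonneg
          · simp [sq_nonneg]
          · positivity
        _ ≤ 2 * σ := by simpa using h
  · have ht0 : 0 < t := lt_trans (by positivity) h
    have hu : 0 < t ^ 2 / (2 * σ ^ 2) := by positivity
    have hexp : Real.exp (-t ^ 2 / (2 * σ ^ 2)) ≤ (t ^ 2 / (2 * σ ^ 2))⁻¹ := by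
      rw [neg_div, Real.exp_neg]
      apply inv_anti₀ hu
      calc t ^ 2 / (2 * σ ^ 2) ≤ t ^ 2 / (2 * σ ^ 2) + 1 := by linarith
        _ ≤ Real.exp (t ^ 2 / (2 * σ ^ 2)) := Real.add_one_le_exp _
    calc t * Real.exp (-t ^ 2 / (2 * σ ^ 2)) ≤ t * (t ^ 2 / (2 * σ ^ 2))⁻¹ :=
          mul_le_mul_of_nonneg_left hexp ht
      _ = 2 * σ ^ 2 / t := by field_simp
      _ ≤ 2 * σ ^ 2 / (2 * σ) := by
          apply div_le_div_of_nonneg_left (by positivity) (by positivity) h.le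
      _ = σ := by field_simp
      _ ≤ 2 * σ := by linarith

/-- The Stable Target Field score identity: for the Gaussian-smoothed density
`p(x) = ∫ φ_σ(x − x₀) dμ(x₀)`, the score satisfies
`∇ log p(x) = (1/p(x)) · ∫ φ_σ(x − x₀) · (x₀ − x)/σ² dμ(x₀)`. -/
theorem gradient_log_smoothed_density (d : ℕ) (hd : 0 < d) (σ : ℝ) (hσ : 0 < σ)
    (μ : Measure (EuclideanSpace ℝ (Fin d))) [IsProbabilityMeasure μ]
    (φ : EuclideanSpace ℝ (Fin d) → ℝ)
    (hφ : ∀ y, φ y = (2 * π * σ ^ 2) ^ (-(d : ℝ) / 2) *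
      Real.exp (-‖y‖ ^ 2 / (2 * σ ^ 2)))
    (p : EuclideanSpace ℝ (Fin d) → ℝ)
    (hp : ∀ x, p x = ∫ x₀, φ (x - x₀) ∂μ) :
    ∀ x, gradient (fun y => Real.log (p y)) x =
      (p x)⁻¹ • ∫ x₀, (φ (x - x₀) / σ ^ 2) • (x₀ - x) ∂μ := by
  have hpeq : p = fun x => ∫ x₀, φ (x - x₀) ∂μ := funext hp
  subst hpeq
  intro x
  set C : ℝ := (2 * π * σ ^ 2) ^ (-(d : ℝ) / 2) with hC
  have hσ2 : (0 : ℝ) < σ ^ 2 := by positivity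
  have hCpos : 0 < C := Real.rpow_pos_of_pos (by positivity) _
  have hφpos : ∀ y, 0 < φ y := fun y => by rw [hφ]; positivity
  have hφle : ∀ y, φ y ≤ C := fun y => by
    rw [hφ]
    calc C * Real.exp (-‖y‖ ^ 2 / (2 * σ ^ 2)) ≤ C * 1 := by
          apply mul_le_mul_of_nonneg_left _ hCpos.le
          rw [Real.exp_le_one_iff]
          apply div_nonpos_of_nonpos_of_nonneg
          · simp [sq_nonneg]
          · positivity
      _ = C := mul_one C
  have hφc : Continuous φ := by
    have : φ = fun y => C * Real.exp (-‖y‖ ^ 2 / (2 * σ ^ 2)) := funext hφ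
    rw [this]
    fun_prop
  -- the pointwise fderiv
  have key : ∀ (x' x₀ : EuclideanSpace ℝ (Fin d)), HasFDerivAt (fun y => φ (y - x₀))
      ((InnerProductSpace.toDual ℝ (EuclideanSpace ℝ (Fin d))) ((φ (x' - x₀) / σ ^ 2) • (x₀ - x'))) x' := by
    intro x' x₀
    have hfun : (fun y : EuclideanSpace ℝ (Fin d) => φ (y - x₀)) =
        fun y => C * Real.exp ((-(2 * σ ^ 2)⁻¹) * ‖y - x₀‖ ^ 2) := by
      funext y; rw [hφ]; congr 1; ring
    rw [hfun]
    have h1 : HasFDerivAt (fun y : EuclideanSpace ℝ (Fin d) => y - x₀) (ContinuousLinearMap.id ℝ (EuclideanSpace ℝ (Fin d))) x' :=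
      (hasFDerivAt_id x').sub_const x₀
    have h2 := h1.norm_sq
    have h3 := h2.const_mul (-(2 * σ ^ 2)⁻¹)
    have h4 := (Real.hasDerivAt_exp ((-(2 * σ ^ 2)⁻¹) * ‖x' - x₀‖ ^ 2)).comp_hasFDerivAt x' h3
    have h5 := h4.const_mul C
    refine h5.congr_fderiv ?_; symm
    ext w
    rw [hφ]
    simp only [InnerProductSpace.toDual_apply_apply, ContinuousLinearMap.smul_apply,
      ContinuousLinearMap.coe_smul', Pi.smul_apply, ContinuousLinearMap.coe_comp',
      Function.comp_apply, ContinuousLinearMap.coe_id', id_eq, innerSL_apply_apply,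
      smul_eq_mul, real_inner_smul_left, innerSL_apply_apply]
    have hinner : (inner ℝ (x₀ - x') w : ℝ) = -(inner ℝ (x' - x₀) w : ℝ) := by
      rw [← inner_neg_left]; congr 1; abel
    rw [hinner]
    have : -‖x' - x₀‖ ^ 2 / (2 * σ ^ 2) = -(2 * σ ^ 2)⁻¹ * ‖x' - x₀‖ ^ 2 := by ring
    rw [this]
    ring
  -- bound on the gradient norm
  have hbound : ∀ (x' x₀ : EuclideanSpace ℝ (Fin d)),
      ‖(InnerProductSpace.toDual ℝ (EuclideanSpace ℝ (Fin d))) ((φ (x' - x₀) / σ ^ 2) • (x₀ - x'))‖ ≤ 2 * C / σ := by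
    intro x' x₀
    rw [LinearIsometryEquiv.norm_map, norm_smul]
    have h1 : ‖x₀ - x'‖ = ‖x' - x₀‖ := norm_sub_rev _ _
    rw [h1, Real.norm_eq_abs, abs_of_pos (div_pos (hφpos _) hσ2)]
    rw [hφ]
    set t := ‖x' - x₀‖ with hht
    have ht : 0 ≤ t := norm_nonneg _
    have := aux_mul_exp_le σ hσ t ht
    calc C * Real.exp (-t ^ 2 / (2 * σ ^ 2)) / σ ^ 2 * t
        = (C / σ ^ 2) * (t * Real.exp (-t ^ 2 / (2 * σ ^ 2))) := by ring
      _ ≤ (C / σ ^ 2) * (2 * σ) := by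
          apply mul_le_mul_of_nonneg_left this (by positivity)
      _ = 2 * C / σ := by field_simp
  -- integrability of the integrand
  have hmeas : ∀ x' : EuclideanSpace ℝ (Fin d), AEStronglyMeasurable (fun x₀ => φ (x' - x₀)) μ :=
    fun x' => ((hφc.comp (continuous_const.sub continuous_id)).aestronglyMeasurable)
  have hint : ∀ x' : EuclideanSpace ℝ (Fin d), Integrable (fun x₀ => φ (x' - x₀)) μ := by
    intro x'
    apply Integrable.mono' (integrable_const C) (hmeas x')
    filter_upwards with x₀
    rw [Real.norm_eq_abs, abs_of_pos (hφpos _)]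
    exact hφle _
  -- continuity/measurability of the vector field
  have hvc : Continuous (fun x₀ : EuclideanSpace ℝ (Fin d) => (φ (x - x₀) / σ ^ 2) • (x₀ - x)) := by
    refine Continuous.smul (f := fun x₀ => φ (x - x₀) / σ ^ 2) (g := fun x₀ => x₀ - x) ?_ ?_
    · exact (hφc.comp (continuous_const.sub continuous_id)).div_const _
    · exact continuous_id.sub continuous_const
  have hvint : Integrable (fun x₀ : EuclideanSpace ℝ (Fin d) => (φ (x - x₀) / σ ^ 2) • (x₀ - x)) μ := by
    apply Integrable.mono' (integrable_const (2 * C / σ)) hvc.aestronglyMeasurable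
    filter_upwards with x₀
    have := hbound x x₀
    rwa [LinearIsometryEquiv.norm_map] at this
  have hF'meas : AEStronglyMeasurable
      (fun x₀ : EuclideanSpace ℝ (Fin d) => (InnerProductSpace.toDual ℝ (EuclideanSpace ℝ (Fin d))) ((φ (x - x₀) / σ ^ 2) • (x₀ - x))) μ :=
    ((InnerProductSpace.toDual ℝ (EuclideanSpace ℝ (Fin d))).continuous.comp hvc).aestronglyMeasurable
  -- differentiate under the integral sign
  have hderiv : HasFDerivAt (fun x' => ∫ x₀, φ (x' - x₀) ∂μ)
      (∫ x₀, (InnerProductSpace.toDual ℝ (EuclideanSpace ℝ (Fin d))) ((φ (x - x₀) / σ ^ 2) • (x₀ - x)) ∂μ) x := by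
    apply hasFDerivAt_integral_of_dominated_of_fderiv_le
      (F := fun x' x₀ => φ (x' - x₀))
      (F' := fun x' x₀ => (InnerProductSpace.toDual ℝ (EuclideanSpace ℝ (Fin d))) ((φ (x' - x₀) / σ ^ 2) • (x₀ - x')))
      (bound := fun _ => 2 * C / σ) (s := Metric.ball x 1) (Metric.ball_mem_nhds x one_pos)
    · filter_upwards with x' using hmeas x'
    · exact hint x
    · exact hF'meas
    · filter_upwards with x₀ x' _ using hbound x' x₀
    · exact integrable_const _
    · filter_upwards with x₀ x' _ using key x' x₀
  -- pass toDual through the integral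
  have hcomm : ∫ x₀, (InnerProductSpace.toDual ℝ (EuclideanSpace ℝ (Fin d))) ((φ (x - x₀) / σ ^ 2) • (x₀ - x)) ∂μ =
      (InnerProductSpace.toDual ℝ (EuclideanSpace ℝ (Fin d))) (∫ x₀, (φ (x - x₀) / σ ^ 2) • (x₀ - x) ∂μ) :=
    (InnerProductSpace.toDual ℝ (EuclideanSpace ℝ (Fin d))).toLinearIsometry.integral_comp_comm _
  rw [hcomm] at hderiv
  -- positivity of p x
  have hpx : 0 < ∫ x₀, φ (x - x₀) ∂μ := by
    rw [integral_pos_iff_support_of_nonneg_ae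
      (Filter.Eventually.of_forall fun x₀ => (hφpos _).le) (hint x)]
    have hsupp : (Function.support fun x₀ => φ (x - x₀)) = Set.univ := by
      apply Set.eq_univ_iff_forall.2
      intro x₀
      simp only [Function.mem_support]
      exact (hφpos _).ne'
    rw [hsupp]
    simp
  -- compose with log
  have hlog := (Real.hasDerivAt_log hpx.ne').comp_hasFDerivAt x hderiv
  have hgrad : HasGradientAt (fun y => Real.log ((fun x => ∫ x₀, φ (x - x₀) ∂μ) y))
      ((∫ x₀, φ (x - x₀) ∂μ)⁻¹ • ∫ x₀, (φ (x - x₀) / σ ^ 2) • (x₀ - x) ∂μ) x := by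
    rw [hasGradientAt_iff_hasFDerivAt]
    refine hlog.congr_fderiv ?_; symm
    ext w
    simp [InnerProductSpace.toDual_apply_apply, real_inner_smul_left]
  exact hgrad.gradient
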